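/- Let λ > 0, let N be a Poisson random variable with mean λ, and let X_1, X_2, … be independent real random variables, independent of N, with E[X_k] = 0, E[X_k²] = 1 and E[|X_k|^j] ≤ c_j for all j ≥ 2 and all k. Then E[(Σ_{k=1}^{N} X_k)²] = λ, and for every integer l ≥ 1 there is a constant K, depending only on l and c_2,…,c_{2l}, such that E[(Σ_{k=1}^{N} X_k)^{2l}] ≤ K · Σ_{r=1}^{l} λ^r; in particular E[(Σ_{k=1}^{N} X_k)^{2l}] ≤ 2K λ^l whenever λ ≥ 1. (Moment estimate for Poisson-stopped random walks used in the proof of Theorem 4.1 of the paper.) -/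

import Mathlib

open MeasureTheory ProbabilityTheory

/-!
Conditioning on the independent index `N` turns a moment of `S_N = ∑_{k<N} X_k` into the
Poisson mixture `∑_n P(N = n) E[f(S_n)]`. For fixed `n`, independence gives `E[S_n²] = n`.
Expanding `S_n^{2l}` as a sum over index maps `Fin (2l) → Fin n`, every monomial in which some
index occurs exactly once has mean zero, so only maps with at most `l` distinct values
contribute: at most `l^{2l} n^l` of them, each bounded by `M^l` with `M` controlling the first
`2l` absolute moments. Finally `n^l ≤ l^l (n^{(l)} + n)`, and the factorial moments
`E[N^{(k)}] = λ^k` of the Poisson law give `E[N^l] ≤ l^l (λ^l + λ)`.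
-/

open Finset
open scoped ENNReal NNReal Nat

theorem exists_forall_eq_imp_eq_of_card_lt {α β : Type*} [Fintype α] [DecidableEq β]
    (p : α → β) (h : Fintype.card α < 2 * #(univ.image p)) :
    ∃ t, ∀ t', p t' = p t → t' = t := by
  by_contra! hshared
  have hfiber : ∀ b ∈ univ.image p, 2 ≤ #{t | p t = b} := by
    intro b hb
    obtain ⟨t, -, rfl⟩ := mem_image.1 hb
    obtain ⟨t', ht', hne⟩ := hshared t
    exact one_lt_card.2 ⟨t, by simp, t', by simp [ht'], hne.symm⟩
  have : 2 * #(univ.image p) ≤ Fintype.card α := by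
    rw [← card_univ, card_eq_sum_card_image p univ, mul_comm, ← smul_eq_mul, ← sum_const]
    exact sum_le_sum hfiber
  omega

theorem card_filter_card_image_le {α β : Type*} [Fintype α] [DecidableEq α] [Fintype β]
    [DecidableEq β] [Nonempty β] (l : ℕ) :
    #{p : α → β | #(univ.image p) ≤ l} ≤ l ^ Fintype.card α * Fintype.card β ^ l := by
  have hsurj : Set.SurjOn (fun q : (α → Fin l) × (Fin l → β) => q.2 ∘ q.1) Set.univ
      {p : α → β | #(univ.image p) ≤ l} := by
    intro p hp
    set L := (univ.image p).toList
    have hidx : ∀ t, L.idxOf (p t) < L.length := fun t =>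
      List.idxOf_lt_length_iff.2 (mem_toList.2 (mem_image_of_mem p (mem_univ t)))
    refine ⟨(fun t => ⟨L.idxOf (p t), (hidx t).trans_le (by rwa [length_toList])⟩,
      fun i => L.getD i (Classical.arbitrary β)), Set.mem_univ _, ?_⟩
    funext t
    exact (List.getD_eq_getElem _ _ (hidx t)).trans (List.getElem_idxOf _)
  calc #{p : α → β | #(univ.image p) ≤ l}
      ≤ #(univ : Finset ((α → Fin l) × (Fin l → β))) :=
        card_le_card_of_surjOn _ (by simpa using hsurj)
    _ = l ^ Fintype.card α * Fintype.card β ^ l := by simp [Fintype.card_prod]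

theorem Nat.pow_le_pow_mul_descFactorial_add (n l : ℕ) :
    n ^ l ≤ l ^ l * (n.descFactorial l + n) := by
  obtain rfl | hl := l.eq_zero_or_pos
  · simp
  rcases le_or_gt l n with hln | hnl
  · obtain ⟨d, rfl⟩ := Nat.exists_eq_add_of_le hln
    calc (l + d) ^ l ≤ (l * (l + d + 1 - l)) ^ l := by
          gcongr
          rw [show l + d + 1 - l = d + 1 by omega]
          nlinarith
      _ = l ^ l * (l + d + 1 - l) ^ l := mul_pow _ _ _
      _ ≤ l ^ l * ((l + d).descFactorial l + (l + d)) := by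
          gcongr
          exact (Nat.pow_sub_le_descFactorial _ _).trans (Nat.le_add_right _ _)
  · obtain rfl | hn := n.eq_zero_or_pos
    · simp [hl.ne']
    calc n ^ l ≤ l ^ l := Nat.pow_le_pow_left hnl.le l
      _ ≤ l ^ l * (n.descFactorial l + n) := Nat.le_mul_of_pos_right _ (by omega)

namespace MeasureTheory

variable {Ω : Type*} [MeasurableSpace Ω] {μ : Measure Ω}

theorem integrable_fun_prod_of_memLp [IsFiniteMeasure μ] {α : Type*} [Fintype α]
    {f : α → Ω → ℝ} (hf : ∀ t, MemLp (f t) (Fintype.card α) μ) :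
    Integrable (fun ω => ∏ t, f t ω) μ := by
  rcases isEmpty_or_nonempty α with _ | _
  · simp
  · have := MemLp.prod' (s := univ) fun t _ => hf t
    rwa [sum_const, card_univ, nsmul_eq_mul, ENNReal.mul_inv_cancel (by simp) (by simp),
      inv_one, memLp_one_iff_integrable] at this

theorem MemLp.integrable_pow_two_mul [IsFiniteMeasure μ] {f : Ω → ℝ} {l : ℕ}
    (hf : MemLp f (2 * l) μ) : Integrable (fun ω => f ω ^ (2 * l)) μ := by
  have := (show MemLp f ((2 * l : ℕ) : ℝ≥0∞) μ by exact_mod_cast hf).integrable_norm_pow'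
  simpa [Real.norm_eq_abs, (even_two_mul l).pow_abs] using this

theorem memLp_two_mul_of_integrable_pow {f : Ω → ℝ} (hf : AEStronglyMeasurable f μ) {l : ℕ}
    (hl : l ≠ 0) (h : Integrable (fun ω => f ω ^ (2 * l)) μ) : MemLp f (2 * l) μ := by
  rw [← integrable_norm_rpow_iff hf (by simp [hl]) (ENNReal.mul_ne_top (by simp) (by simp))]
  refine h.congr (ae_of_all _ fun ω => ?_)
  dsimp only
  rw [Real.norm_eq_abs, ← (even_two_mul l).pow_abs, ← Real.rpow_natCast]
  simp

theorem abs_integral_pow_le_one_add_sum {f : Ω → ℝ} (hmean : ∫ ω, f ω ∂μ = 0) {c : ℕ → ℝ}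
    (hc : ∀ j, 2 ≤ j → ∫ ω, |f ω| ^ j ∂μ ≤ c j) {e j : ℕ} (hj : 1 ≤ j) (hje : j ≤ e) :
    |∫ ω, f ω ^ j ∂μ| ≤ 1 + ∑ i ∈ range (e + 1), |c i| := by
  have hsum : 0 ≤ ∑ i ∈ range (e + 1), |c i| := sum_nonneg fun i _ => abs_nonneg _
  obtain rfl | hj2 := hj.eq_or_lt
  · simp only [pow_one, hmean, abs_zero]
    linarith
  calc |∫ ω, f ω ^ j ∂μ| ≤ ∫ ω, |f ω| ^ j ∂μ := by
        simpa only [abs_pow] using abs_integral_le_integral_abs (f := fun ω => f ω ^ j)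
    _ ≤ |c j| := (hc j hj2).trans (le_abs_self _)
    _ ≤ ∑ i ∈ range (e + 1), |c i| :=
        single_le_sum (f := fun i => |c i|) (fun i _ => abs_nonneg _) (mem_range.2 (by omega))
    _ ≤ 1 + ∑ i ∈ range (e + 1), |c i| := le_add_of_nonneg_left zero_le_one

end MeasureTheory

namespace ProbabilityTheory

theorem integral_sum_sq_eq_card {Ω ι : Type*} [MeasurableSpace Ω] {μ : Measure Ω}
    [IsFiniteMeasure μ] {X : ι → Ω → ℝ} (s : Finset ι) (hX : ∀ i ∈ s, MemLp (X i) 2 μ)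
    (hind : Set.Pairwise s fun i j => X i ⟂ᵢ[μ] X j)
    (hmean : ∀ i ∈ s, ∫ ω, X i ω ∂μ = 0) (hvar : ∀ i ∈ s, ∫ ω, X i ω ^ 2 ∂μ = 1) :
    ∫ ω, (∑ i ∈ s, X i ω) ^ 2 ∂μ = #s := by
  have hsum_mean : ∫ ω, ∑ i ∈ s, X i ω ∂μ = 0 := by
    rw [integral_finsetSum _ fun i hi => (hX i hi).integrable one_le_two]
    exact sum_eq_zero hmean
  rw [← variance_of_integral_eq_zero (memLp_finsetSum s hX).aemeasurable hsum_mean, ← sum_fn,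
    IndepFun.variance_sum hX hind, sum_congr rfl fun i hi => (variance_of_integral_eq_zero
      (hX i hi).aemeasurable (hmean i hi)).trans (hvar i hi)]
  simp

namespace iIndepFun

variable {Ω ι α : Type*} [MeasurableSpace Ω] {μ : Measure Ω} [Fintype ι] [DecidableEq ι]
  [Fintype α] {Y : ι → Ω → ℝ}

theorem integral_prod_comp_eq_prod_integral_pow (hY : iIndepFun Y μ)
    (hmeas : ∀ i, Measurable (Y i)) (p : α → ι) :
    ∫ ω, ∏ t, Y (p t) ω ∂μ = ∏ i, ∫ ω, Y i ω ^ #{t | p t = i} ∂μ := by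
  have hfiber : ∀ ω, ∏ t, Y (p t) ω = ∏ i, Y i ω ^ #{t | p t = i} := fun ω => by
    rw [← prod_fiberwise univ p]
    refine prod_congr rfl fun i _ => ?_
    rw [prod_congr rfl fun t ht => by rw [(mem_filter.1 ht).2], prod_const]
  simp_rw [hfiber]
  exact hY.integral_fun_prod_comp (f := fun i x => x ^ #{t | p t = i})
    (fun i => (hmeas i).aemeasurable) fun i => (continuous_pow _).aestronglyMeasurable

theorem integral_prod_comp_eq_zero (hY : iIndepFun Y μ) (hmeas : ∀ i, Measurable (Y i))
    (hmean : ∀ i, ∫ ω, Y i ω ∂μ = 0) (p : α → ι) {t : α}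
    (ht : ∀ t', p t' = p t → t' = t) :
    ∫ ω, ∏ t, Y (p t) ω ∂μ = 0 := by
  rw [hY.integral_prod_comp_eq_prod_integral_pow hmeas]
  refine prod_eq_zero (mem_univ (p t)) ?_
  have hsingle : #{t' | p t' = p t} = 1 :=
    card_eq_one.2 ⟨t, by ext t'; simpa using ⟨ht t', fun h => h ▸ rfl⟩⟩
  simp [hsingle, hmean]

theorem abs_integral_prod_comp_le [IsProbabilityMeasure μ] (hY : iIndepFun Y μ)
    (hmeas : ∀ i, Measurable (Y i)) {M : ℝ}
    (hM : ∀ i j, 1 ≤ j → j ≤ Fintype.card α → |∫ ω, Y i ω ^ j ∂μ| ≤ M) (p : α → ι) :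
    |∫ ω, ∏ t, Y (p t) ω ∂μ| ≤ M ^ #(univ.image p) := by
  have hout : ∀ i ∉ univ.image p, #{t | p t = i} = 0 := fun i hi =>
    card_eq_zero.2 (filter_eq_empty_iff.2 fun t _ hti =>
      hi (hti ▸ mem_image_of_mem p (mem_univ t)))
  rw [hY.integral_prod_comp_eq_prod_integral_pow hmeas, abs_prod,
    ← prod_subset (subset_univ _) fun i _ hi => by simp [hout i hi], ← prod_const]
  refine prod_le_prod (fun _ _ => abs_nonneg _) fun i hi => hM i _ ?_ (card_filter_le _ _)
  obtain ⟨t, -, rfl⟩ := mem_image.1 hi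
  exact card_pos.2 ⟨t, by simp⟩

theorem integral_sum_pow_two_mul_le [IsProbabilityMeasure μ] (hY : iIndepFun Y μ)
    (hmeas : ∀ i, Measurable (Y i)) {l : ℕ} (hLp : ∀ i, MemLp (Y i) (2 * l) μ)
    (hmean : ∀ i, ∫ ω, Y i ω ∂μ = 0) {M : ℝ} (hM1 : 1 ≤ M)
    (hM : ∀ i j, 1 ≤ j → j ≤ 2 * l → |∫ ω, Y i ω ^ j ∂μ| ≤ M) :
    ∫ ω, (∑ i, Y i ω) ^ (2 * l) ∂μ ≤ l ^ (2 * l) * M ^ l * Fintype.card ι ^ l := by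
  rcases isEmpty_or_nonempty ι with _ | _
  · obtain rfl | hl := l.eq_zero_or_pos
    · simp
    · simp [hl.ne']
  have hterm : ∀ p : Fin (2 * l) → ι,
      ∫ ω, ∏ t, Y (p t) ω ∂μ ≤ if #(univ.image p) ≤ l then M ^ l else 0 := by
    intro p
    split_ifs with hp
    · exact (le_abs_self _).trans ((hY.abs_integral_prod_comp_le hmeas (by simpa using hM) p).trans
        (pow_le_pow_right₀ hM1 hp))
    · obtain ⟨t, ht⟩ := exists_forall_eq_imp_eq_of_card_lt p (by rw [Fintype.card_fin]; omega)
      exact (hY.integral_prod_comp_eq_zero hmeas hmean p ht).le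
  calc ∫ ω, (∑ i, Y i ω) ^ (2 * l) ∂μ
      = ∑ p : Fin (2 * l) → ι, ∫ ω, ∏ t, Y (p t) ω ∂μ := by
        simp_rw [sum_pow', Fintype.piFinset_univ]
        exact integral_finsetSum _ fun p _ =>
          integrable_fun_prod_of_memLp fun t => by simpa using hLp (p t)
    _ ≤ ∑ p : Fin (2 * l) → ι, if #(univ.image p) ≤ l then M ^ l else 0 :=
        sum_le_sum fun p _ => hterm p
    _ = #{p : Fin (2 * l) → ι | #(univ.image p) ≤ l} * M ^ l := by
        rw [sum_ite, sum_const_zero, add_zero, sum_const, nsmul_eq_mul]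
    _ ≤ (l ^ (2 * l) * Fintype.card ι ^ l : ℕ) * M ^ l := by
        gcongr
        simpa using card_filter_card_image_le (α := Fin (2 * l)) (β := ι) l
    _ = l ^ (2 * l) * M ^ l * Fintype.card ι ^ l := by push_cast; ring

end iIndepFun

theorem hasSum_poisson_mul_descFactorial (r : ℝ≥0) (k : ℕ) :
    HasSum (fun n => Real.exp (-r) * r ^ n / n ! * n.descFactorial k) (r ^ k) := by
  have hvanish : ∀ n ∉ Set.range (· + k),
      Real.exp (-r) * r ^ n / n ! * n.descFactorial k = 0 := by
    intro n hn
    rw [Nat.descFactorial_eq_zero_iff_lt.2 (by by_contra h; exact hn ⟨n - k, show n - k + k = n by omega⟩)]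
    simp
  rw [← (add_left_injective k).hasSum_iff hvanish]
  convert! (hasSum_one_poissonMeasure r).mul_left ((r : ℝ) ^ k) using 1
  · funext m
    have hfact := Nat.factorial_mul_descFactorial (Nat.le_add_left k m)
    rw [Nat.add_sub_cancel] at hfact
    simp only [Function.comp, ← hfact, Nat.cast_mul, pow_add]
    field_simp
  · rw [mul_one]

theorem lintegral_descFactorial_poissonMeasure (r : ℝ≥0) (k : ℕ) :
    ∫⁻ n, (n.descFactorial k : ℝ≥0∞) ∂poissonMeasure r = r ^ k := by
  have h := hasSum_poisson_mul_descFactorial r k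
  simp_rw [lintegral_countable', poissonMeasure_singleton, ← ENNReal.ofReal_natCast,
    ← ENNReal.ofReal_mul (Nat.cast_nonneg _), mul_comm (Nat.cast _ : ℝ)]
  rw [← ENNReal.ofReal_tsum_of_nonneg (fun n => by positivity) h.summable, h.tsum_eq,
    ← ENNReal.ofReal_coe_nnreal, ENNReal.ofReal_pow (by positivity)]

theorem lintegral_natCast_poissonMeasure (r : ℝ≥0) :
    ∫⁻ n, (n : ℝ≥0∞) ∂poissonMeasure r = r := by
  simpa using lintegral_descFactorial_poissonMeasure r 1

theorem lintegral_pow_poissonMeasure_le (r : ℝ≥0) (l : ℕ) :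
    ∫⁻ n, (n : ℝ≥0∞) ^ l ∂poissonMeasure r ≤ l ^ l * (r ^ l + r) := by
  calc ∫⁻ n, (n : ℝ≥0∞) ^ l ∂poissonMeasure r
      ≤ ∫⁻ n, l ^ l * ((n.descFactorial l : ℝ≥0∞) + n) ∂poissonMeasure r :=
        lintegral_mono fun n => by
          exact_mod_cast Nat.cast_le.2 (Nat.pow_le_pow_mul_descFactorial_add n l)
    _ = l ^ l * (r ^ l + r) := by
        rw [lintegral_const_mul _ (by fun_prop), lintegral_add_left (by fun_prop),
          lintegral_descFactorial_poissonMeasure, lintegral_natCast_poissonMeasure]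

theorem lintegral_apply_eq_lintegral_map_of_indep {Ω : Type*} {m mΩ : MeasurableSpace Ω}
    {μ : Measure Ω} (hm : m ≤ mΩ) {N : Ω → ℕ} (hN : Measurable N)
    (hind : Indep (MeasurableSpace.comap N inferInstance) m μ) {F : ℕ → Ω → ℝ≥0∞}
    (hF : ∀ n, Measurable[m] (F n)) :
    ∫⁻ ω, F (N ω) ω ∂μ = ∫⁻ n, ∫⁻ ω, F n ω ∂μ ∂μ.map N := by
  have hNm : MeasurableSpace.comap N inferInstance ≤ mΩ := measurable_iff_comap_le.1 hN
  have hlevel : ∀ n, Measurable[MeasurableSpace.comap N inferInstance]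
      ((N ⁻¹' {n}).indicator (1 : Ω → ℝ≥0∞)) :=
    fun n => by exact measurable_const.indicator ⟨{n}, measurableSet_singleton n, rfl⟩
  have hsplit : ∀ ω, F (N ω) ω = ∑' n, (N ⁻¹' {n}).indicator 1 ω * F n ω := fun ω => by
    rw [tsum_eq_single (N ω) fun n hn => by simp [Set.indicator, Ne.symm hn]]
    simp [Set.indicator]
  rw [lintegral_congr hsplit,
    lintegral_tsum (f := fun n ω => (N ⁻¹' {n}).indicator 1 ω * F n ω) fun n =>
      (((hlevel n).mono hNm le_rfl).mul ((hF n).mono hm le_rfl)).aemeasurable,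
    lintegral_countable']
  refine tsum_congr fun n => ?_
  rw [lintegral_mul_eq_lintegral_mul_lintegral_of_independent_measurableSpace hNm hm hind
    (hlevel n) (hF n), lintegral_indicator_one (hN (measurableSet_singleton n)),
    Measure.map_apply hN (measurableSet_singleton n), mul_comm]

variable {Ω : Type*} [MeasurableSpace Ω] {μ : Measure Ω} {N : Ω → ℕ} {X : ℕ → Ω → ℝ}

theorem measurable_sum_range_stopped (hN : Measurable N) (hX : ∀ k, Measurable (X k)) :
    Measurable fun ω => ∑ k ∈ range (N ω), X k ω := by
  have hjoint : Measurable fun q : Ω × ℕ => ∑ k ∈ range q.2, X k q.1 :=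
    measurable_from_prod_countable_left fun n => Finset.measurable_sum (range n) fun k _ => hX k
  exact hjoint.comp (measurable_id.prodMk hN)

theorem lintegral_comp_sum_range_stopped (hN : Measurable N) (hX : ∀ k, Measurable (X k))
    (hind : Indep (MeasurableSpace.comap N inferInstance)
      (⨆ k, MeasurableSpace.comap (X k) inferInstance) μ)
    {g : ℝ → ℝ≥0∞} (hg : Measurable g) :
    ∫⁻ ω, g (∑ k ∈ range (N ω), X k ω) ∂μ
      = ∫⁻ n, ∫⁻ ω, g (∑ k ∈ range n, X k ω) ∂μ ∂μ.map N := by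
  refine lintegral_apply_eq_lintegral_map_of_indep (F := fun n ω => g (∑ k ∈ range n, X k ω))
    (iSup_le fun k => measurable_iff_comap_le.1 (hX k)) hN hind fun _ => ?_
  exact hg.comp (Finset.measurable_sum _ fun k _ => (comap_measurable (X k)).mono
    (le_iSup (fun k => MeasurableSpace.comap (X k) inferInstance) k) le_rfl)

theorem integral_sq_sum_range_stopped [IsProbabilityMeasure μ] (hN : Measurable N)
    (hX : ∀ k, Measurable (X k)) (hindX : iIndepFun X μ)
    (hind : Indep (MeasurableSpace.comap N inferInstance)
      (⨆ k, MeasurableSpace.comap (X k) inferInstance) μ)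
    (hmean : ∀ k, ∫ ω, X k ω ∂μ = 0) (hvar : ∀ k, ∫ ω, X k ω ^ 2 ∂μ = 1) :
    ∫ ω, (∑ k ∈ range (N ω), X k ω) ^ 2 ∂μ = (∫⁻ n, (n : ℝ≥0∞) ∂μ.map N).toReal := by
  have hL2 : ∀ k, MemLp (X k) 2 μ := fun k =>
    (memLp_two_iff_integrable_sq (hX k).aestronglyMeasurable).2
      (Integrable.of_integral_ne_zero (by rw [hvar k]; exact one_ne_zero))
  have hsq : ∀ n, ∫⁻ ω, ENNReal.ofReal ((∑ k ∈ range n, X k ω) ^ 2) ∂μ = n := fun n => by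
    rw [← ofReal_integral_eq_lintegral_ofReal
        (memLp_finsetSum _ fun k _ => hL2 k).integrable_sq (ae_of_all _ fun ω => sq_nonneg _),
      integral_sum_sq_eq_card (range n) (fun k _ => hL2 k)
        (fun i _ j _ hij => hindX.indepFun hij) (fun k _ => hmean k) (fun k _ => hvar k),
      card_range, ENNReal.ofReal_natCast]
  rw [integral_eq_lintegral_of_nonneg_ae (ae_of_all _ fun ω => sq_nonneg _)
      ((measurable_sum_range_stopped hN hX).pow_const 2).aestronglyMeasurable,
    lintegral_comp_sum_range_stopped hN hX hind (g := fun x => ENNReal.ofReal (x ^ 2))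
      (by fun_prop)]
  simp_rw [hsq]

theorem memLp_of_integrable_pow_sum_range_stopped (hN : Measurable N)
    (hX : ∀ k, Measurable (X k))
    (hind : Indep (MeasurableSpace.comap N inferInstance)
      (⨆ k, MeasurableSpace.comap (X k) inferInstance) μ)
    (hsupp : ∀ n, μ.map N {n} ≠ 0) {l : ℕ} (hl : l ≠ 0)
    (h : Integrable (fun ω => (∑ k ∈ range (N ω), X k ω) ^ (2 * l)) μ) (k : ℕ) :
    MemLp (X k) (2 * l) μ := by
  have hpow : ∀ x : ℝ, 0 ≤ x ^ (2 * l) := (even_two_mul l).pow_nonneg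
  have hfin :
      ∫⁻ n, ∫⁻ ω, ENNReal.ofReal ((∑ k ∈ range n, X k ω) ^ (2 * l)) ∂μ ∂μ.map N ≠ ⊤ := by
    rw [← lintegral_comp_sum_range_stopped hN hX hind
      (g := fun x => ENNReal.ofReal (x ^ (2 * l))) (by fun_prop)]
    exact (lintegral_ofReal_ne_top_iff_integrable h.1 (ae_of_all _ fun ω => hpow _)).2 h
  have hS : ∀ n, MemLp (fun ω => ∑ k ∈ range n, X k ω) (2 * l) μ := fun n => by
    have hSm : Measurable fun ω => ∑ k ∈ range n, X k ω :=
      Finset.measurable_sum _ fun k _ => hX k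
    refine memLp_two_mul_of_integrable_pow hSm.aestronglyMeasurable hl
      ((lintegral_ofReal_ne_top_iff_integrable (hSm.pow_const _).aestronglyMeasurable
        (ae_of_all _ fun ω => hpow _)).1 ?_)
    exact (ae_iff_of_countable.1 (ae_lt_top' .of_discrete hfin) n (hsupp n)).ne
  convert (hS (k + 1)).sub (hS k) using 1
  funext ω
  simp [sum_range_succ]

theorem lintegral_pow_sum_range_stopped_le [IsProbabilityMeasure μ] (hN : Measurable N)
    (hX : ∀ k, Measurable (X k)) (hindX : iIndepFun X μ)
    (hind : Indep (MeasurableSpace.comap N inferInstance)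
      (⨆ k, MeasurableSpace.comap (X k) inferInstance) μ)
    {l : ℕ} (hLp : ∀ k, MemLp (X k) (2 * l) μ) (hmean : ∀ k, ∫ ω, X k ω ∂μ = 0) {M : ℝ}
    (hM1 : 1 ≤ M) (hM : ∀ k j, 1 ≤ j → j ≤ 2 * l → |∫ ω, X k ω ^ j ∂μ| ≤ M) :
    ∫⁻ ω, ENNReal.ofReal ((∑ k ∈ range (N ω), X k ω) ^ (2 * l)) ∂μ
      ≤ ENNReal.ofReal (l ^ (2 * l) * M ^ l) * ∫⁻ n, (n : ℝ≥0∞) ^ l ∂μ.map N := by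
  have hSn : ∀ n,
      ∫ ω, (∑ k ∈ range n, X k ω) ^ (2 * l) ∂μ ≤ l ^ (2 * l) * M ^ l * n ^ l := by
    intro n
    have := (hindX.precomp Fin.val_injective).integral_sum_pow_two_mul_le
      (Y := fun i : Fin n => X i) (fun i => hX i) (fun i => hLp i) (fun i => hmean i) hM1
      fun i => hM i
    have hrange : ∀ ω, ∑ i : Fin n, X i ω = ∑ k ∈ range n, X k ω := fun ω =>
      Fin.sum_univ_eq_sum_range (X · ω) n
    simpa only [hrange, Fintype.card_fin] using this
  rw [lintegral_comp_sum_range_stopped hN hX hind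
      (g := fun x => ENNReal.ofReal (x ^ (2 * l))) (by fun_prop),
    ← lintegral_const_mul' _ _ ENNReal.ofReal_ne_top]
  refine lintegral_mono fun n => ?_
  rw [← ofReal_integral_eq_lintegral_ofReal
    (memLp_finsetSum _ fun k _ => hLp k).integrable_pow_two_mul
    (ae_of_all _ fun ω => (even_two_mul l).pow_nonneg _)]
  calc ENNReal.ofReal (∫ ω, (∑ k ∈ range n, X k ω) ^ (2 * l) ∂μ)
      ≤ ENNReal.ofReal (l ^ (2 * l) * M ^ l * n ^ l) := ENNReal.ofReal_le_ofReal (hSn n)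
    _ = ENNReal.ofReal (l ^ (2 * l) * M ^ l) * n ^ l := by
        rw [ENNReal.ofReal_mul (by positivity), ENNReal.ofReal_pow (by positivity),
          ENNReal.ofReal_natCast]

theorem integral_pow_sum_range_stopped_le [IsProbabilityMeasure μ] {r : ℝ≥0} (hr : 0 < r)
    (hN : Measurable N) (hlaw : μ.map N = poissonMeasure r) (hX : ∀ k, Measurable (X k))
    (hindX : iIndepFun X μ)
    (hind : Indep (MeasurableSpace.comap N inferInstance)
      (⨆ k, MeasurableSpace.comap (X k) inferInstance) μ)
    (hmean : ∀ k, ∫ ω, X k ω ∂μ = 0) {l : ℕ} (hl : l ≠ 0) {M : ℝ} (hM1 : 1 ≤ M)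
    (hM : ∀ k j, 1 ≤ j → j ≤ 2 * l → |∫ ω, X k ω ^ j ∂μ| ≤ M) :
    ∫ ω, (∑ k ∈ range (N ω), X k ω) ^ (2 * l) ∂μ
      ≤ l ^ (2 * l) * M ^ l * l ^ l * (r ^ l + r) := by
  -- `hM` carries no information when `X k ^ j` is not integrable (its integral is then `0`),
  -- so the integrability of the `X k` is recovered from that of the stopped sum.
  by_cases hint : Integrable (fun ω => (∑ k ∈ range (N ω), X k ω) ^ (2 * l)) μ
  swap
  · rw [integral_undef hint]
    positivity
  have hsupp : ∀ n, μ.map N {n} ≠ 0 := fun n => by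
    rw [hlaw, poissonMeasure_singleton]
    exact (ENNReal.ofReal_pos.2 (by positivity)).ne'
  have hLp := memLp_of_integrable_pow_sum_range_stopped hN hX hind hsupp hl hint
  refine (ENNReal.ofReal_le_ofReal_iff (by positivity)).1 ?_
  calc ENNReal.ofReal (∫ ω, (∑ k ∈ range (N ω), X k ω) ^ (2 * l) ∂μ)
      = ∫⁻ ω, ENNReal.ofReal ((∑ k ∈ range (N ω), X k ω) ^ (2 * l)) ∂μ :=
        ofReal_integral_eq_lintegral_ofReal hint
          (ae_of_all _ fun ω => (even_two_mul l).pow_nonneg _)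
    _ ≤ ENNReal.ofReal (l ^ (2 * l) * M ^ l) * ∫⁻ n, (n : ℝ≥0∞) ^ l ∂μ.map N :=
        lintegral_pow_sum_range_stopped_le hN hX hindX hind hLp hmean hM1 hM
    _ ≤ ENNReal.ofReal (l ^ (2 * l) * M ^ l) * (l ^ l * (r ^ l + r)) := by
        rw [hlaw]
        gcongr
        exact lintegral_pow_poissonMeasure_le r l
    _ = ENNReal.ofReal (l ^ (2 * l) * M ^ l * l ^ l * (r ^ l + r)) := by
        rw [← ENNReal.ofReal_coe_nnreal, ← ENNReal.ofReal_natCast,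
          ← ENNReal.ofReal_pow (Nat.cast_nonneg l), ← ENNReal.ofReal_pow r.coe_nonneg,
          ← ENNReal.ofReal_add (by positivity) r.coe_nonneg,
          ← ENNReal.ofReal_mul (by positivity), ← ENNReal.ofReal_mul (by positivity)]
        ring_nf

end ProbabilityTheory

/-- moment estimate for Poisson-stopped random walks, from the proof of
Theorem 4.1 of the paper. For independent mean-zero, variance-one steps `X k` with
`E|X k|^j ≤ c j`, independent of a Poisson variable `N` with mean `λ`, the randomly stopped
sum `S = ∑_{k<N} X k` satisfies `E[S²] = λ` and, for every `l ≥ 1`, there is a constant `K`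
depending only on `l` and the `c j` (in particular not on `λ`) with
`E[S^{2l}] ≤ K ∑_{r=1}^l λ^r`, so `E[S^{2l}] ≤ 2 K λ^l` when `λ ≥ 1`. -/
theorem statement12 (l : ℕ) (hl : 1 ≤ l) (c : ℕ → ℝ) :
    ∃ K : ℝ, ∀ (Ω : Type) (_ : MeasurableSpace Ω) (μ : Measure Ω),
      IsProbabilityMeasure μ →
      ∀ (lam : ℝ), 0 < lam →
      ∀ (N : Ω → ℕ) (X : ℕ → Ω → ℝ),
        Measurable N →
        (∀ k, Measurable (X k)) →
        (∀ k : ℕ, μ {ω | N ω = k}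
          = ENNReal.ofReal (Real.exp (-lam) * lam ^ k / (Nat.factorial k))) →
        iIndepFun X μ →
        Indep (MeasurableSpace.comap N inferInstance)
          (⨆ k : ℕ, MeasurableSpace.comap (X k) inferInstance) μ →
        (∀ k, ∫ ω, X k ω ∂μ = 0) →
        (∀ k, ∫ ω, (X k ω) ^ 2 ∂μ = 1) →
        (∀ k, ∀ j : ℕ, 2 ≤ j → ∫ ω, |X k ω| ^ j ∂μ ≤ c j) →
        (∫ ω, (∑ k ∈ Finset.range (N ω), X k ω) ^ 2 ∂μ = lam) ∧
        (∫ ω, (∑ k ∈ Finset.range (N ω), X k ω) ^ (2 * l) ∂μ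
          ≤ K * ∑ r ∈ Finset.Icc 1 l, lam ^ r) ∧
        (1 ≤ lam →
          ∫ ω, (∑ k ∈ Finset.range (N ω), X k ω) ^ (2 * l) ∂μ ≤ 2 * K * lam ^ l) := by
  set M : ℝ := 1 + ∑ j ∈ range (2 * l + 1), |c j|
  have hM1 : 1 ≤ M := le_add_of_nonneg_right (sum_nonneg fun j _ => abs_nonneg _)
  set C : ℝ := l ^ (2 * l) * M ^ l * l ^ l
  refine ⟨2 * C, fun Ω _ μ _ lam hlam N X hN hX hpois hindX hindN hmean hvar hmom => ?_⟩
  set r : ℝ≥0 := ⟨lam, hlam.le⟩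
  have hlaw : μ.map N = poissonMeasure r := Measure.ext_iff_singleton.2 fun n => by
    rw [Measure.map_apply hN (measurableSet_singleton n), poissonMeasure_singleton]
    exact hpois n
  have hbound : ∫ ω, (∑ k ∈ range (N ω), X k ω) ^ (2 * l) ∂μ ≤ C * (lam ^ l + lam) :=
    integral_pow_sum_range_stopped_le (r := r) hlam hN hlaw hX hindX hindN hmean (by omega) hM1
      fun k j hj hje => abs_integral_pow_le_one_add_sum (hmean k) (hmom k) hj hje
  have hC : 0 ≤ C := by positivity
  have hlam_le : lam ≤ ∑ r ∈ Icc 1 l, lam ^ r := by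
    simpa using single_le_sum (f := (lam ^ ·)) (fun r _ => by positivity)
      (mem_Icc.2 ⟨le_rfl, hl⟩)
  have hlaml_le : lam ^ l ≤ ∑ r ∈ Icc 1 l, lam ^ r :=
    single_le_sum (f := (lam ^ ·)) (fun r _ => by positivity) (mem_Icc.2 ⟨hl, le_rfl⟩)
  refine ⟨?_, ?_, fun hlam1 => ?_⟩
  · rw [integral_sq_sum_range_stopped hN hX hindX hindN hmean hvar, hlaw,
      lintegral_natCast_poissonMeasure]
    rfl
  · nlinarith
  · nlinarith [le_self_pow₀ hlam1 (by omega : l ≠ 0)]
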